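/- arXiv:1707.00756 — 2 statements merged into one kernel-verified Lean document; each statement's English description precedes it below -/
import Mathlib

section
/- For integers e ≥ 1 and 0 ≤ r ≤ e, the two expressions for the degree A_e^r agree: (∏_{j=0}^{r-1} C(e+j, r-j)) / (∏_{j=0}^{r-1} C(2j+1, j)) = 2^{-C(r,2)} · det(M), where M is the r×r matrix with entries M_{i,j} = C(e, r+1-2i+j) for i,j = 1,…,r. -/
/-!
Index rows and columns from `0` and put `a = 2 (r - 1 - i) + 1`. Then the entry `C(e, r - 2i + j)`
equals `e! / (a! (e + r - 1 - a)!) · P_j(a)`, where `P_j(X) = X^{(r-1-j)} (e + r - 1 - X)^{(j)}`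
(falling factorials) has degree `r - 1`. After pulling out the row factors, the matrix `(P_j(a_i))`
is a Vandermonde matrix times the coefficient matrix of the `P_j`, so passing from the nodes
`a_i = 2 z_i + 1` to `z_i = r - 1 - i` divides the determinant by `2^C(r,2)`. At the nodes `z_i`
the matrix is upper triangular, and the row factors times the diagonal entries give
`C(e+i, r-i) / C(2(r-1-i)+1, r-1-i)`, whose product is the left-hand side after reversing the
order of the denominators.
-/

open Finset Polynomial Nat

namespace Matrix

variable {R : Type*} [CommRing R] {n : ℕ}

theorem det_vandermonde_const_mul (a : R) (v : Fin n → R) :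
    (vandermonde fun i ↦ a * v i).det = a ^ n.choose 2 * (vandermonde v).det := by
  have hrow : (vandermonde fun i ↦ a * v i) =
      of fun i j : Fin n ↦ a ^ (j : ℕ) * vandermonde v i j := by
    ext i j
    simp [vandermonde_apply, mul_pow]
  rw [hrow, det_mul_row, prod_pow_eq_pow_sum, Fin.sum_univ_eq_sum_range (fun j ↦ j), sum_range_id,
    choose_two_right]

theorem of_eval_eq_vandermonde_mul_of_coeff (v : Fin n → R) (p : Fin n → R[X])
    (hp : ∀ j, (p j).natDegree < n) :
    of (fun i j ↦ (p j).eval (v i)) = vandermonde v * of fun k j : Fin n ↦ (p j).coeff k := by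
  ext i j
  rw [mul_apply, of_apply, eval_eq_sum_range' (hp j), ← Fin.sum_univ_eq_sum_range
    (fun k ↦ (p j).coeff k * v i ^ k)]
  simp only [vandermonde_apply, of_apply, mul_comm]

theorem det_of_eval_const_mul_add (p : Fin n → R[X]) (hp : ∀ j, (p j).natDegree < n)
    (v : Fin n → R) (a b : R) :
    (of fun i j ↦ (p j).eval (a * v i + b)).det =
      a ^ n.choose 2 * (of fun i j ↦ (p j).eval (v i)).det := by
  rw [of_eval_eq_vandermonde_mul_of_coeff _ p hp, of_eval_eq_vandermonde_mul_of_coeff _ p hp,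
    det_mul, det_mul, det_vandermonde_add (fun i ↦ a * v i), det_vandermonde_const_mul, mul_assoc]

end Matrix

theorem Nat.factorial_mul_factorial_mul_choose_sub {a b e s u : ℕ} (h : a + b = e + s + u)
    (hs : s ≤ a) :
    a ! * b ! * e.choose (a - s) = e ! * a.descFactorial s * b.descFactorial u := by
  rcases lt_or_ge e (a - s) with he | he
  · rw [choose_eq_zero_of_lt he, (descFactorial_eq_zero_iff_lt (n := b)).mpr (by omega)]
    simp
  · have hu : u ≤ b := by omega
    rw [← factorial_mul_descFactorial hs, ← factorial_mul_descFactorial hu,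
      ← choose_mul_factorial_mul_factorial he, show e - (a - s) = b - u by omega]
    ring

noncomputable def fallingFactorialProduct (R : Type*) [CommRing R] (m s u : ℕ) : R[X] :=
  descPochhammer R s * (descPochhammer R u).comp (C (m : R) - X)

theorem fallingFactorialProduct_eval_natCast {R : Type*} [CommRing R] {m a : ℕ} (s u : ℕ)
    (ha : a ≤ m) :
    (fallingFactorialProduct R m s u).eval (a : R) =
      a.descFactorial s * (m - a).descFactorial u := by
  rw [fallingFactorialProduct, eval_mul, eval_comp, eval_sub, eval_C, eval_X,
    ← Nat.cast_sub ha, descPochhammer_eval_eq_descFactorial, descPochhammer_eval_eq_descFactorial]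

theorem natDegree_fallingFactorialProduct_le (R : Type*) [CommRing R] [IsDomain R] (m s u : ℕ) :
    (fallingFactorialProduct R m s u).natDegree ≤ s + u := by
  refine natDegree_mul_le.trans (Nat.add_le_add (descPochhammer_natDegree R s).le ?_)
  refine natDegree_comp_le.trans ?_
  rw [descPochhammer_natDegree]
  refine (Nat.mul_le_mul_left u (natDegree_sub_le _ _)).trans ?_
  simp

theorem choose_sub_eq_mul_eval_fallingFactorialProduct (K : Type*) [Field K] [CharZero K]
    {e m a s u : ℕ} (hm : m = e + s + u) (ha : a ≤ m) :
    (if s ≤ a then (e.choose (a - s) : K) else 0) =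
      e ! / (a ! * (m - a)!) * (fallingFactorialProduct K m s u).eval (a : K) := by
  rw [fallingFactorialProduct_eval_natCast s u ha]
  split_ifs with hs
  · have key := factorial_mul_factorial_mul_choose_sub (b := m - a) (e := e) (u := u) (by omega) hs
    rw [div_mul_eq_mul_div, eq_div_iff (by simp [factorial_ne_zero])]
    exact_mod_cast (mul_comm _ _).trans (key.trans (mul_assoc _ _ _))
  · simp [descFactorial_eq_zero_iff_lt.mpr (not_le.mp hs)]

theorem det_binomial_matrix_eq_prod_mul_det_eval {e r : ℕ} (hre : r ≤ e) :
    Matrix.det (fun i j : Fin r ↦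
        if _h : (0 : ℤ) ≤ (r : ℤ) + 1 - 2 * ((i : ℤ) + 1) + ((j : ℤ) + 1) then
          (e.choose ((r : ℤ) + 1 - 2 * ((i : ℤ) + 1) + ((j : ℤ) + 1)).toNat : ℚ)
        else 0) =
      (∏ i : Fin r,
          (e ! / ((2 * (r - 1 - i) + 1)! * (e + r - 1 - (2 * (r - 1 - i) + 1))!) : ℚ)) *
        (Matrix.of fun i j : Fin r ↦ (fallingFactorialProduct ℚ (e + r - 1) (r - 1 - j) j).eval
          (2 * ((r - 1 - i : ℕ) : ℚ) + 1)).det := by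
  refine (congrArg Matrix.det ?_).trans (Matrix.det_mul_column _ _)
  ext i j
  have key := choose_sub_eq_mul_eval_fallingFactorialProduct ℚ (e := e) (m := e + r - 1)
    (a := 2 * (r - 1 - i) + 1) (s := r - 1 - j) (u := j) (by omega) (by omega)
  have hpt : 2 * ((r - 1 - i : ℕ) : ℚ) + 1 = ((2 * (r - 1 - i) + 1 : ℕ) : ℚ) := by
    push_cast; ring
  rw [Matrix.of_apply, Matrix.of_apply, hpt, ← key]
  split_ifs <;> first | rfl | omega | (congr 2; omega)

theorem det_of_eval_fallingFactorialProduct_natCast (R : Type*) [CommRing R] (e r : ℕ) :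
    (Matrix.of fun i j : Fin r ↦
        (fallingFactorialProduct R (e + r - 1) (r - 1 - j) j).eval ((r - 1 - i : ℕ) : R)).det =
      ∏ i : Fin r, ((r - 1 - i)! * (e + i).descFactorial i : R) := by
  have heval (i j : Fin r) := fallingFactorialProduct_eval_natCast (R := R) (m := e + r - 1)
    (a := r - 1 - i) (r - 1 - j) j (by omega)
  rw [Matrix.det_of_isUpperTriangular]
  · refine prod_congr rfl fun i _ ↦ ?_
    rw [Matrix.of_apply, heval, descFactorial_self, show e + r - 1 - (r - 1 - i) = e + i by omega]
  · intro i j (hji : j < i)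
    rw [Matrix.of_apply, heval, descFactorial_eq_zero_iff_lt.mpr (by omega), Nat.cast_zero,
      zero_mul]

theorem factorial_div_mul_descFactorial_eq_choose_div_choose (K : Type*) [Field K] [CharZero K]
    {e i k : ℕ} (h : k + 1 ≤ e + i) :
    (e ! / ((2 * k + 1)! * (e + i - (k + 1))!) : K) * (k ! * (e + i).descFactorial i) =
      (e + i).choose (k + 1) / (2 * k + 1).choose k := by
  have hdesc := factorial_mul_descFactorial (Nat.le_add_left i e)
  rw [Nat.add_sub_cancel] at hdesc
  rw [cast_choose K h, cast_choose K (by omega : k ≤ 2 * k + 1),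
    show 2 * k + 1 - k = k + 1 by omega, ← hdesc]
  have : ((k + 1)! : K) ≠ 0 := by exact_mod_cast factorial_ne_zero _
  push_cast
  field_simp

theorem prod_fin_choose_div_choose_eq (e r : ℕ) :
    ∏ i : Fin r, ((e + i).choose (r - i) / (2 * (r - 1 - i) + 1).choose (r - 1 - i) : ℚ) =
      (∏ j ∈ range r, ((e + j).choose (r - j) : ℚ)) /
        ∏ j ∈ range r, ((2 * j + 1).choose j : ℚ) := by
  rw [Fin.prod_univ_eq_prod_range (fun i ↦ ((e + i).choose (r - i) /
      (2 * (r - 1 - i) + 1).choose (r - 1 - i) : ℚ)), prod_div_distrib,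
    prod_range_reflect (fun j ↦ ((2 * j + 1).choose j : ℚ))]

theorem degree_symmetric_determinantal_two_formulas_general (e r : ℕ) (hre : r ≤ e) :
    (∏ j ∈ Finset.range r, ((e + j).choose (r - j) : ℚ)) /
      (∏ j ∈ Finset.range r, ((2 * j + 1).choose j : ℚ)) =
    (2 : ℚ) ^ (-(r.choose 2 : ℤ)) *
      Matrix.det (fun i j : Fin r =>
        if h : (0 : ℤ) ≤ (r : ℤ) + 1 - 2 * ((i : ℤ) + 1) + ((j : ℤ) + 1) then
          (e.choose ((r : ℤ) + 1 - 2 * ((i : ℤ) + 1) + ((j : ℤ) + 1)).toNat : ℚ)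
        else 0) := by
  set P : Fin r → ℚ[X] := fun j ↦ fallingFactorialProduct ℚ (e + r - 1) (r - 1 - j) j
  have hdeg (j : Fin r) : (P j).natDegree < r :=
    (natDegree_fallingFactorialProduct_le ℚ _ _ _).trans_lt (by omega)
  rw [det_binomial_matrix_eq_prod_mul_det_eval hre,
    Matrix.det_of_eval_const_mul_add P hdeg (fun i ↦ ((r - 1 - i : ℕ) : ℚ)) 2 1,
    det_of_eval_fallingFactorialProduct_natCast ℚ, zpow_neg, zpow_natCast, mul_left_comm,
    inv_mul_cancel_left₀ (by positivity), ← prod_mul_distrib, ← prod_fin_choose_div_choose_eq]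
  refine prod_congr rfl fun i _ ↦ ?_
  generalize hk : r - 1 - (i : ℕ) = k
  rw [show r - i = k + 1 by omega, show e + r - 1 - (2 * k + 1) = e + i - (k + 1) by omega,
    factorial_div_mul_descFactorial_eq_choose_div_choose ℚ (by omega)]

/-- The two expressions for the degree `A_e^r` of the corank-`r` symmetric
determinantal variety agree: the ratio of binomial products equals
`2^{-C(r,2)}` times the determinant of the `r × r` matrix with entries
`C(e, r+1-2i+j)` for `i, j = 1, …, r` (with `C(n,k) = 0` for `k < 0`). -/
theorem degree_symmetric_determinantal_two_formulas (e r : ℕ) (he : 1 ≤ e) (hre : r ≤ e) :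
    (∏ j ∈ Finset.range r, ((e + j).choose (r - j) : ℚ)) /
      (∏ j ∈ Finset.range r, ((2 * j + 1).choose j : ℚ)) =
    (2 : ℚ) ^ (-(r.choose 2 : ℤ)) *
      Matrix.det (fun i j : Fin r =>
        if h : (0 : ℤ) ≤ (r : ℤ) + 1 - 2 * ((i : ℤ) + 1) + ((j : ℤ) + 1) then
          (e.choose ((r : ℤ) + 1 - 2 * ((i : ℤ) + 1) + ((j : ℤ) + 1)).toNat : ℚ)
        else 0) :=
  degree_symmetric_determinantal_two_formulas_general e r hre
end

section
/- For every real ℓ ≥ 1, the quantity (13ℓ-2)(36ℓ-13)(27ℓ²-19ℓ+2)(36ℓ²-13ℓ-1) / (2(9ℓ-2)(9ℓ-1)(15552ℓ⁶-25920ℓ⁵+17484ℓ⁴-6102ℓ³+1181ℓ²-107ℓ+2)(36ℓ²-13ℓ+2)) is strictly positive; consequently the slope s = 6 + 12/(g+1) − (this quantity), with g = (4ℓ-1)(9ℓ-1), satisfies s < 6 + 12/(g+1). -/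
/-!
Substituting `ℓ = 1 + t`, every factor of the numerator and of the denominator of the deficit
becomes a polynomial in `t` with positive coefficients, so the deficit is positive for `t ≥ 0`;
subtracting a positive quantity from `6 + 12/(g+1)` then makes it smaller.
-/

namespace SlopeDeficit

def numerator (l : ℝ) : ℝ :=
  (13 * l - 2) * (36 * l - 13) * (27 * l ^ 2 - 19 * l + 2) * (36 * l ^ 2 - 13 * l - 1)

def denominator (l : ℝ) : ℝ :=
  2 * (9 * l - 2) * (9 * l - 1) *
    (15552 * l ^ 6 - 25920 * l ^ 5 + 17484 * l ^ 4 - 6102 * l ^ 3 +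
      1181 * l ^ 2 - 107 * l + 2) * (36 * l ^ 2 - 13 * l + 2)

noncomputable def deficit (l : ℝ) : ℝ := numerator l / denominator l

theorem numerator_one_add (t : ℝ) :
    numerator (1 + t) =
      (11 + 13 * t) * (23 + 36 * t) * (10 + 35 * t + 27 * t ^ 2) * (22 + 59 * t + 36 * t ^ 2) := by
  unfold numerator
  ring

theorem denominator_one_add (t : ℝ) :
    denominator (1 + t) =
      2 * (7 + 9 * t) * (8 + 9 * t) *
        (2090 + 17597 * t + 61859 * t ^ 2 + 115674 * t ^ 3 + 121164 * t ^ 4 + 67392 * t ^ 5 +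
          15552 * t ^ 6) * (25 + 59 * t + 36 * t ^ 2) := by
  unfold denominator
  ring

theorem exists_eq_one_add {l : ℝ} (hl : 1 ≤ l) : ∃ t : ℝ, 0 ≤ t ∧ l = 1 + t :=
  ⟨l - 1, sub_nonneg.2 hl, by ring⟩

theorem numerator_pos {l : ℝ} (hl : 1 ≤ l) : 0 < numerator l := by
  obtain ⟨t, ht, rfl⟩ := exists_eq_one_add hl
  rw [numerator_one_add]
  positivity

theorem denominator_pos {l : ℝ} (hl : 1 ≤ l) : 0 < denominator l := by
  obtain ⟨t, ht, rfl⟩ := exists_eq_one_add hl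
  rw [denominator_one_add]
  positivity

theorem deficit_pos {l : ℝ} (hl : 1 ≤ l) : 0 < deficit l :=
  div_pos (numerator_pos hl) (denominator_pos hl)

end SlopeDeficit

/-- For every real `ℓ ≥ 1`, the slope deficit of the divisor `D_{9ℓ-2,4ℓ-1}` is
strictly positive; hence the slope `s = 6 + 12/(g+1) - deficit`, with
`g = (4ℓ-1)(9ℓ-1)`, satisfies `s < 6 + 12/(g+1)`. -/
theorem slope_deficit_positive (l : ℝ) (hl : 1 ≤ l) :
    0 < (13 * l - 2) * (36 * l - 13) * (27 * l ^ 2 - 19 * l + 2) *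
          (36 * l ^ 2 - 13 * l - 1) /
        (2 * (9 * l - 2) * (9 * l - 1) *
          (15552 * l ^ 6 - 25920 * l ^ 5 + 17484 * l ^ 4 - 6102 * l ^ 3 +
            1181 * l ^ 2 - 107 * l + 2) * (36 * l ^ 2 - 13 * l + 2)) ∧
    (6 + 12 / ((4 * l - 1) * (9 * l - 1) + 1) -
        (13 * l - 2) * (36 * l - 13) * (27 * l ^ 2 - 19 * l + 2) *
            (36 * l ^ 2 - 13 * l - 1) /
          (2 * (9 * l - 2) * (9 * l - 1) *
            (15552 * l ^ 6 - 25920 * l ^ 5 + 17484 * l ^ 4 - 6102 * l ^ 3 +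
              1181 * l ^ 2 - 107 * l + 2) * (36 * l ^ 2 - 13 * l + 2))) <
      6 + 12 / ((4 * l - 1) * (9 * l - 1) + 1) := by
  have hdeficit : 0 < SlopeDeficit.deficit l := SlopeDeficit.deficit_pos hl
  exact ⟨hdeficit, sub_lt_self _ hdeficit⟩
end
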